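/- Theorem 2.1 (full conservation for the new DG method): Suppose (u_h, q_h, p_h) satisfy the semidiscrete DG scheme with zero source, with numerical traces given by û_h = {u_h}, q̂_h = {q_h} + τ_qu ⟦u_h⟧, p̂_h = {p_h} + τ_pu ⟦u_h⟧ at every node, where τ_qu, τ_pu : [0,T] → ℝ are (node-independent) parameters satisfying, at every t: (a) τ_pu Σ_{i=1}^N ⟦u_h⟧²(x_i) − ε τ_qu Σ_{i=1}^N ⟦u_h⟧⟦q_h⟧(x_i) = Σ_{i=1}^N ( ⟦V(u_h)⟧ − {Π f(u_h)} ⟦u_h⟧ )(x_i), and (b) τ_pu Σ_{i=1}^N ⟦p_h⟧⟦u_h⟧(x_i) + ε τ_qu Σ_{i=1}^N ⟦∂_t u_h⟧⟦u_h⟧(x_i) = 0. Then all three discrete invariants are conserved on [0,T]: t ↦ Σ_{i=1}^N ∫_{I_i} u_h dx (mass), t ↦ Σ_{i=1}^N ∫_{I_i} u_h² dx (energy), and t ↦ Σ_{i=1}^N ∫_{I_i} ( (ε/2) q_h² − V(u_h) ) dx (Hamiltonian) are all constant. -/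

import Mathlib

/-!
Each invariant is differentiated in time and its rate of change is shown to vanish. With the
numerical traces substituted, periodic summation by parts turns every boundary term into a sum of
averages times jumps. Testing the third equation with `1` kills the mass rate `(∂ₜu, 1)`. Testing
the equations with `u, p, q` and `Πf(u)`, and using the projection property, writes the energy
rate `(∂ₜu, u)` as a jump sum; differentiating the first equation in time and testing with
`q, ∂ₜu, p` does the same for the Hamiltonian rate `ε (∂ₜq, q) - (f(u), ∂ₜu)`. These two jump
sums are exactly the ones that constraints (a) and (b) set to zero.

The time dependence is only given pointwise in `y`. A polynomial of degree `≤ k` is a linear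
function of its values at the nodes `0, …, k`, so differentiating an integral in time reduces to
differentiating under the integral sign with respect to finitely many nodal values.
-/

open Polynomial Set

noncomputable section

namespace DG

/-- A broken polynomial function in `W_h^k` (before imposing the degree bound):
the polynomial indexed by `i` is the restriction of the function to
element `I_i = (x (i-1), x i)`, for `i = 1,…,N`. -/
abbrev Broken := ℕ → Polynomial ℝ

/-- Membership in `W_h^k`: every elementwise polynomial has degree at most `k`. -/
def DegLE (k : ℕ) (P : Broken) : Prop := ∀ i, (P i).natDegree ≤ k

/-- `(F, G) = Σ_{i=1}^N ∫_{I_i} F_i G_i dx` for families of functions on the elements. -/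
def ip (x : ℕ → ℝ) (N : ℕ) (F G : ℕ → ℝ → ℝ) : ℝ :=
  ∑ i ∈ Finset.Icc 1 N, ∫ y in (x (i-1))..(x i), F i y * G i y

/-- the family of real functions determined by a broken polynomial -/
def ev (P : Broken) : ℕ → ℝ → ℝ := fun i y => (P i).eval y

/-- elementwise spatial derivative -/
def dx (P : Broken) : Broken := fun i => (P i).derivative

/-- `⟨φ̂, v n⟩ = Σ_{i=1}^N [φ̂(x_i) v(x_i⁻) - φ̂(x_{i-1}) v(x_{i-1}⁺)]` where `φ̂` is a
numerical trace, i.e. a function on the node indices. -/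
def bt (x : ℕ → ℝ) (N : ℕ) (φ : ℕ → ℝ) (v : Broken) : ℝ :=
  ∑ i ∈ Finset.Icc 1 N, (φ i * (v i).eval (x i) - φ (i - 1) * (v i).eval (x (i - 1)))

/-- the one-sided limit `ζ(x_i⁻)` of a broken polynomial at the node `x_i`, `i = 1,…,N` -/
def lv (x : ℕ → ℝ) (P : Broken) (i : ℕ) : ℝ := (P i).eval (x i)

/-- the one-sided limit `ζ(x_i⁺)` at the node `x_i`, with the periodic identification
`ζ(x_N⁺) = ζ(x_0⁺)` -/
def rv (x : ℕ → ℝ) (N : ℕ) (P : Broken) (i : ℕ) : ℝ :=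
  if i = N then (P 1).eval (x 0) else (P (i + 1)).eval (x i)

/-- the jump `⟦ζ⟧(x_i) = ζ(x_i⁻) - ζ(x_i⁺)` -/
def jmp (x : ℕ → ℝ) (N : ℕ) (P : Broken) (i : ℕ) : ℝ := lv x P i - rv x N P i

/-- the average `{ζ}(x_i) = (ζ(x_i⁻) + ζ(x_i⁺))/2` -/
def avg (x : ℕ → ℝ) (N : ℕ) (P : Broken) (i : ℕ) : ℝ := (lv x P i + rv x N P i) / 2

/-- the jump `⟦g(ζ)⟧(x_i)` of a composition `g ∘ ζ` -/
def jmpC (x : ℕ → ℝ) (N : ℕ) (g : ℝ → ℝ) (P : Broken) (i : ℕ) : ℝ :=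
  g (lv x P i) - g (rv x N P i)

/-- `η(w,v) = Σ_{i=1}^N ⟦w⟧⟦v⟧(x_i)` -/
def eta (x : ℕ → ℝ) (N : ℕ) (w v : Broken) : ℝ :=
  ∑ i ∈ Finset.Icc 1 N, jmp x N w i * jmp x N v i

/-- the mesh `a = x 0 < x 1 < ⋯ < x N = b` -/
structure Mesh (a b : ℝ) (N : ℕ) (x : ℕ → ℝ) : Prop where
  hab : a < b
  hN : 1 ≤ N
  left : x 0 = a
  right : x N = b
  mono : ∀ i, i < N → x i < x (i + 1)

/-- `Pf` is the elementwise L²-projection of the function `y ↦ f(ζ(y))` onto `W_h^k`: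
it has degree at most `k` and `∫_{I_i} (Pf - f(ζ)) w = 0` for every polynomial `w` of
degree at most `k` and every element `i`. -/
def IsProj (x : ℕ → ℝ) (N k : ℕ) (f : ℝ → ℝ) (P Pf : Broken) : Prop :=
  DegLE k Pf ∧ ∀ i ∈ Finset.Icc 1 N, ∀ w : Polynomial ℝ, w.natDegree ≤ k →
    (∫ y in (x (i-1))..(x i), ((Pf i).eval y - f ((P i).eval y)) * w.eval y) = 0

/-- a numerical trace takes equal values at the nodes `x_0` and `x_N` -/
def IsTrace (N : ℕ) (φ : ℕ → ℝ) : Prop := φ 0 = φ N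

/-- The semidiscrete DG scheme with zero source on `[0,T]`: `u q p : ℝ → Broken`
are the approximations (depending differentiably on `t`, with time derivatives
`ut qt pt`), and `uh qh ph` are the (possibly `t`-dependent) numerical traces. -/
structure Scheme (x : ℕ → ℝ) (N k : ℕ) (T ε : ℝ) (f : ℝ → ℝ)
    (u q p ut qt pt : ℝ → Broken) (uh qh ph : ℝ → ℕ → ℝ) : Prop where
  degu : ∀ t ∈ Icc (0:ℝ) T, DegLE k (u t)
  degq : ∀ t ∈ Icc (0:ℝ) T, DegLE k (q t)
  degp : ∀ t ∈ Icc (0:ℝ) T, DegLE k (p t)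
  degut : ∀ t ∈ Icc (0:ℝ) T, DegLE k (ut t)
  trace_u : ∀ t ∈ Icc (0:ℝ) T, IsTrace N (uh t)
  trace_q : ∀ t ∈ Icc (0:ℝ) T, IsTrace N (qh t)
  trace_p : ∀ t ∈ Icc (0:ℝ) T, IsTrace N (ph t)
  du : ∀ t ∈ Icc (0:ℝ) T, ∀ i, ∀ y : ℝ,
    HasDerivWithinAt (fun s => ((u s) i).eval y) (((ut t) i).eval y) (Icc (0:ℝ) T) t
  dq : ∀ t ∈ Icc (0:ℝ) T, ∀ i, ∀ y : ℝ,
    HasDerivWithinAt (fun s => ((q s) i).eval y) (((qt t) i).eval y) (Icc (0:ℝ) T) t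
  dp : ∀ t ∈ Icc (0:ℝ) T, ∀ i, ∀ y : ℝ,
    HasDerivWithinAt (fun s => ((p s) i).eval y) (((pt t) i).eval y) (Icc (0:ℝ) T) t
  eq1 : ∀ t ∈ Icc (0:ℝ) T, ∀ v : Broken, DegLE k v →
    ip x N (ev (q t)) (ev v) + ip x N (ev (u t)) (ev (dx v)) - bt x N (uh t) v = 0
  eq2 : ∀ t ∈ Icc (0:ℝ) T, ∀ z : Broken, DegLE k z →
    ip x N (ev (p t)) (ev z) + ε * ip x N (ev (q t)) (ev (dx z)) - ε * bt x N (qh t) z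
      = ip x N (fun i y => f (((u t) i).eval y)) (ev z)
  eq3 : ∀ t ∈ Icc (0:ℝ) T, ∀ w : Broken, DegLE k w →
    ip x N (ev (ut t)) (ev w) - ip x N (ev (p t)) (ev (dx w)) + bt x N (ph t) w = 0

end DG

namespace DG

open Finset

section Interpolation

variable {k : ℕ}

def nodalValues (k : ℕ) (p : ℝ[X]) : Fin (k + 1) → ℝ := fun m => p.eval (m : ℝ)

def evalInterp (k : ℕ) (y : ℝ) : (Fin (k + 1) → ℝ) →L[ℝ] ℝ :=
  LinearMap.toContinuousLinearMap
    ((leval y).comp (Lagrange.interpolate Finset.univ fun m : Fin (k + 1) => (m : ℝ)))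

theorem evalInterp_apply (y : ℝ) (c : Fin (k + 1) → ℝ) :
    evalInterp k y c
      = (Lagrange.interpolate Finset.univ (fun m : Fin (k + 1) => (m : ℝ)) c).eval y :=
  rfl

theorem injOn_nodes :
    Set.InjOn (fun m : Fin (k + 1) => (m : ℝ)) (Finset.univ : Finset (Fin (k + 1))) :=
  (Nat.cast_injective.comp Fin.val_injective).injOn

theorem evalInterp_nodalValues {p : ℝ[X]} (hp : p.natDegree ≤ k) (y : ℝ) :
    evalInterp k y (nodalValues k p) = p.eval y := by
  have hlt : p.degree < (Finset.univ : Finset (Fin (k + 1))).card := by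
    rw [Finset.card_univ, Fintype.card_fin]
    exact degree_le_natDegree.trans_lt (by exact_mod_cast Nat.lt_succ_of_le hp)
  rw [evalInterp_apply]
  exact congrArg (eval y) (Lagrange.eq_interpolate injOn_nodes hlt).symm

theorem continuous_evalInterp : Continuous (evalInterp k) :=
  continuous_clm_apply.2 fun c => by
    simpa only [evalInterp_apply] using Polynomial.continuous _

theorem continuous_evalInterp_uncurry :
    Continuous fun q : (Fin (k + 1) → ℝ) × ℝ => evalInterp k q.2 q.1 :=
  (continuous_evalInterp.comp continuous_snd).clm_apply continuous_fst

theorem hasDerivWithinAt_nodalValues {P : ℝ → ℝ[X]} {Q : ℝ[X]} {S : Set ℝ} {t : ℝ}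
    (hd : ∀ y, HasDerivWithinAt (fun s => (P s).eval y) (Q.eval y) S t) :
    HasDerivWithinAt (fun s => nodalValues k (P s)) (nodalValues k Q) S t :=
  hasDerivWithinAt_pi.2 fun m => hd m

theorem natDegree_le_of_hasDerivWithinAt {P : ℝ → ℝ[X]} {Q : ℝ[X]} {S : Set ℝ} {t : ℝ}
    (hS : UniqueDiffWithinAt ℝ S t) (ht : t ∈ S) (hdeg : ∀ s ∈ S, (P s).natDegree ≤ k)
    (hd : ∀ y, HasDerivWithinAt (fun s => (P s).eval y) (Q.eval y) S t) :
    Q.natDegree ≤ k := by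
  have hQ : Q = Lagrange.interpolate Finset.univ (fun m : Fin (k + 1) => (m : ℝ))
      (nodalValues k Q) := by
    refine Polynomial.funext fun y => hS.eq_deriv S (hd y) ?_
    exact ((evalInterp k y).hasFDerivAt.comp_hasDerivWithinAt t
      (hasDerivWithinAt_nodalValues hd)).congr_of_mem
      (fun s hs => (evalInterp_nodalValues (hdeg s hs) y).symm) ht
  have := Lagrange.degree_interpolate_lt (r := nodalValues k Q) (injOn_nodes (k := k))
  rw [← hQ, Finset.card_univ, Fintype.card_fin] at this
  exact natDegree_le_iff_degree_le.2 (Order.le_of_lt_succ this)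

end Interpolation

section ParametricIntegral

variable {k : ℕ} {α β : ℝ} {G g : ℝ → ℝ → ℝ}

theorem hasFDerivAt_integral_comp_evalInterp (hG : ∀ y z, HasDerivAt (G y) (g y z) z)
    (hGc : Continuous (Function.uncurry G)) (hgc : Continuous (Function.uncurry g))
    (c₀ : Fin (k + 1) → ℝ) :
    HasFDerivAt (fun c => ∫ y in α..β, G y (evalInterp k y c))
      (∫ y in α..β, g y (evalInterp k y c₀) • evalInterp k y) c₀ := by
  have hF : Continuous fun q : (Fin (k + 1) → ℝ) × ℝ => G q.2 (evalInterp k q.2 q.1) :=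
    hGc.comp (continuous_snd.prodMk continuous_evalInterp_uncurry)
  have hF' : Continuous fun q : (Fin (k + 1) → ℝ) × ℝ =>
      g q.2 (evalInterp k q.2 q.1) • evalInterp k q.2 :=
    (hgc.comp (continuous_snd.prodMk continuous_evalInterp_uncurry)).smul
      (continuous_evalInterp.comp continuous_snd)
  obtain ⟨C, hC⟩ := ((isCompact_closedBall c₀ 1).prod isCompact_uIcc).exists_bound_of_continuousOn
    hF'.continuousOn
  refine intervalIntegral.hasFDerivAt_integral_of_dominated_of_fderiv_le (bound := fun _ => C)
    (Metric.ball_mem_nhds c₀ one_pos)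
    (Filter.Eventually.of_forall fun c =>
      (hF.comp (Continuous.prodMk_right c)).aestronglyMeasurable)
    ((hF.comp (Continuous.prodMk_right c₀)).intervalIntegrable _ _)
    (hF'.comp (Continuous.prodMk_right c₀)).aestronglyMeasurable
    (MeasureTheory.ae_of_all _ fun y hy c hc =>
      hC (c, y) ⟨Metric.ball_subset_closedBall hc, uIoc_subset_uIcc hy⟩)
    intervalIntegrable_const
    (MeasureTheory.ae_of_all _ fun y _ c _ =>
      (hG y _).comp_hasFDerivAt c (evalInterp k y).hasFDerivAt)

theorem hasDerivWithinAt_integral_comp_eval (hG : ∀ y z, HasDerivAt (G y) (g y z) z)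
    (hGc : Continuous (Function.uncurry G)) (hgc : Continuous (Function.uncurry g))
    {P : ℝ → ℝ[X]} {Q : ℝ[X]} {S : Set ℝ} {t : ℝ} (ht : t ∈ S)
    (hdeg : ∀ s ∈ S, (P s).natDegree ≤ k) (hQ : Q.natDegree ≤ k)
    (hd : ∀ y, HasDerivWithinAt (fun s => (P s).eval y) (Q.eval y) S t) :
    HasDerivWithinAt (fun s => ∫ y in α..β, G y ((P s).eval y))
      (∫ y in α..β, g y ((P t).eval y) * Q.eval y) S t := by
  have h := (hasFDerivAt_integral_comp_evalInterp (α := α) (β := β) hG hGc hgc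
    (nodalValues k (P t))).comp_hasDerivWithinAt t (hasDerivWithinAt_nodalValues hd)
  have hint : IntervalIntegrable (fun y => g y (evalInterp k y (nodalValues k (P t))) •
      evalInterp k y) MeasureTheory.volume α β :=
    ((hgc.comp (continuous_id.prodMk (continuous_evalInterp.clm_apply continuous_const))).smul
      continuous_evalInterp).intervalIntegrable _ _
  rw [Function.comp_def, ContinuousLinearMap.intervalIntegral_apply hint] at h
  simp only [smul_apply, smul_eq_mul, evalInterp_nodalValues hQ,
    evalInterp_nodalValues (hdeg t ht)] at h
  refine h.congr_of_mem (fun s hs => ?_) ht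
  simp only [evalInterp_nodalValues (hdeg s hs)]

end ParametricIntegral

section Broken

variable {x : ℕ → ℝ} {N k : ℕ}

theorem sum_Icc_one_eq_sum_range (g : ℕ → ℝ) :
    ∑ i ∈ Finset.Icc 1 N, g i = ∑ i ∈ range N, g (i + 1) := by
  rw [range_eq_Ico, sum_Ico_add' g 0 N 1]
  rfl

theorem sum_Icc_sub_one_eq_of_eq {h : ℕ → ℝ} (h0 : h 0 = h N) :
    ∑ i ∈ Finset.Icc 1 N, h (i - 1) = ∑ i ∈ Finset.Icc 1 N, h i := by
  rw [sum_Icc_one_eq_sum_range, sum_Icc_one_eq_sum_range]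
  simp only [Nat.add_sub_cancel]
  linarith [sum_range_succ h N, sum_range_succ' h N]

theorem rv_sub_one (P : Broken) {i : ℕ} (hi : i ∈ Finset.Icc 1 N) :
    rv x N P (i - 1) = (P i).eval (x (i - 1)) := by
  rw [Finset.mem_Icc] at hi
  rw [rv, if_neg (by omega), Nat.sub_add_cancel hi.1]

theorem rv_zero (hN : 1 ≤ N) (P : Broken) : rv x N P 0 = rv x N P N := by
  rw [rv, rv, if_neg (by omega), if_pos rfl]

/-- Summation by parts over the periodic mesh: the left-node value `x_{i-1}` of element `i`
is the right limit at node `i - 1`, and node `0` is identified with node `N`. -/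
theorem sum_sub_eval_left_node (hN : 1 ≤ N) (g : ℕ → ℝ → ℝ) (hg : g 0 = g N) (P : Broken) :
    ∑ i ∈ Finset.Icc 1 N, (g i ((P i).eval (x i)) - g (i - 1) ((P i).eval (x (i - 1))))
      = ∑ i ∈ Finset.Icc 1 N, (g i (lv x P i) - g i (rv x N P i)) := by
  rw [sum_sub_distrib, sum_sub_distrib]
  congr 1
  calc ∑ i ∈ Finset.Icc 1 N, g (i - 1) ((P i).eval (x (i - 1)))
      = ∑ i ∈ Finset.Icc 1 N, (fun j => g j (rv x N P j)) (i - 1) :=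
        sum_congr rfl fun i hi => (congrArg (g (i - 1)) (rv_sub_one P hi)).symm
    _ = ∑ i ∈ Finset.Icc 1 N, g i (rv x N P i) :=
        sum_Icc_sub_one_eq_of_eq (h := fun j => g j (rv x N P j)) (by rw [rv_zero hN, hg])

theorem bt_eq_sum_mul_jmp (hN : 1 ≤ N) {φ : ℕ → ℝ} (hφ : IsTrace N φ) (v : Broken) :
    bt x N φ v = ∑ i ∈ Finset.Icc 1 N, φ i * jmp x N v i := by
  calc bt x N φ v = ∑ i ∈ Finset.Icc 1 N, (φ i * lv x v i - φ i * rv x N v i) :=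
        sum_sub_eval_left_node hN (fun i z => φ i * z) (by rw [hφ]) v
    _ = ∑ i ∈ Finset.Icc 1 N, φ i * jmp x N v i := sum_congr rfl fun i _ => (mul_sub _ _ _).symm

def avgJump (x : ℕ → ℝ) (N : ℕ) (P Q : Broken) : ℝ :=
  ∑ i ∈ Finset.Icc 1 N, avg x N P i * jmp x N Q i

theorem bt_eq_avgJump_add_eta (hN : 1 ≤ N) {φ : ℕ → ℝ} (htr : IsTrace N φ)
    {P U : Broken} {τ : ℝ} (hφ : ∀ i ∈ Finset.Icc 1 N, φ i = avg x N P i + τ * jmp x N U i)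
    (v : Broken) :
    bt x N φ v = avgJump x N P v + τ * eta x N U v := by
  rw [bt_eq_sum_mul_jmp hN htr, avgJump, eta, mul_sum, ← sum_add_distrib]
  exact sum_congr rfl fun i hi => by rw [hφ i hi]; ring

theorem eta_comm (P Q : Broken) : eta x N P Q = eta x N Q P :=
  sum_congr rfl fun _ _ => mul_comm _ _

theorem jmp_one (i : ℕ) : jmp x N 1 i = 0 := by
  simp only [jmp, lv, rv, Pi.one_apply, eval_one]
  split_ifs <;> ring

theorem jmp_mul (P Q : Broken) (i : ℕ) :
    jmp x N (P * Q) i = avg x N P i * jmp x N Q i + jmp x N P i * avg x N Q i := by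
  simp only [jmp, avg, lv, rv, Pi.mul_apply, eval_mul]
  split_ifs <;> ring

theorem ip_comm (F G : ℕ → ℝ → ℝ) : ip x N F G = ip x N G F :=
  sum_congr rfl fun _ _ => intervalIntegral.integral_congr fun _ _ => mul_comm _ _

theorem degLE_dx {P : Broken} (hP : DegLE k P) : DegLE k (dx P) := fun i =>
  (natDegree_derivative_le _).trans ((Nat.sub_le _ _).trans (hP i))

theorem ip_dx_add_ip_dx (hN : 1 ≤ N) (P Q : Broken) :
    ip x N (ev P) (ev (dx Q)) + ip x N (ev (dx P)) (ev Q)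
      = avgJump x N P Q + avgJump x N Q P := by
  have hibp : ∀ i, (∫ y in x (i - 1)..x i, (P i).eval y * (Q i).derivative.eval y)
      + (∫ y in x (i - 1)..x i, (P i).derivative.eval y * (Q i).eval y)
      = ((P * Q) i).eval (x i) - ((P * Q) i).eval (x (i - 1)) := fun i => by
    rw [Pi.mul_apply, eval_mul, eval_mul, intervalIntegral.integral_mul_deriv_eq_deriv_mul
      (fun y _ => (P i).hasDerivAt y) (fun y _ => (Q i).hasDerivAt y)
      ((P i).derivative.continuous.intervalIntegrable _ _)
      ((Q i).derivative.continuous.intervalIntegrable _ _)]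
    ring
  calc ip x N (ev P) (ev (dx Q)) + ip x N (ev (dx P)) (ev Q)
      = ∑ i ∈ Finset.Icc 1 N, (((P * Q) i).eval (x i) - ((P * Q) i).eval (x (i - 1))) := by
        rw [ip, ip, ← sum_add_distrib]
        exact sum_congr rfl fun i _ => hibp i
    _ = ∑ i ∈ Finset.Icc 1 N, jmp x N (P * Q) i :=
        sum_sub_eval_left_node hN (fun _ => id) rfl (P * Q)
    _ = avgJump x N P Q + avgJump x N Q P := by
        rw [avgJump, avgJump, ← sum_add_distrib]
        exact sum_congr rfl fun i _ => by rw [jmp_mul]; ring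

theorem ip_dx_self (hN : 1 ≤ N) (P : Broken) : ip x N (ev P) (ev (dx P)) = avgJump x N P P := by
  linarith [ip_dx_add_ip_dx (x := x) hN P P, ip_comm (x := x) (N := N) (ev P) (ev (dx P))]

theorem ip_comp_dx (hN : 1 ≤ N) {f V : ℝ → ℝ} (hf : Continuous f)
    (hV : ∀ y, HasDerivAt V (f y) y) (P : Broken) :
    ip x N (fun i y => f ((P i).eval y)) (ev (dx P)) = ∑ i ∈ Finset.Icc 1 N, jmpC x N V P i := by
  calc ip x N (fun i y => f ((P i).eval y)) (ev (dx P))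
      = ∑ i ∈ Finset.Icc 1 N, (V ((P i).eval (x i)) - V ((P i).eval (x (i - 1)))) :=
        sum_congr rfl fun i _ => intervalIntegral.integral_eq_sub_of_hasDerivAt
          (fun y _ => (hV _).comp y ((P i).hasDerivAt y))
          (((hf.comp (P i).continuous).mul (P i).derivative.continuous).intervalIntegrable _ _)
    _ = ∑ i ∈ Finset.Icc 1 N, jmpC x N V P i := sum_sub_eval_left_node hN (fun _ => V) rfl P

theorem ip_comp_eq_of_isProj {f : ℝ → ℝ} (hf : Continuous f) {P Pf : Broken}
    (hP : IsProj x N k f P Pf) {z : Broken} (hz : DegLE k z) :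
    ip x N (fun i y => f ((P i).eval y)) (ev z) = ip x N (ev Pf) (ev z) := by
  refine sum_congr rfl fun i hi => ?_
  refine (sub_eq_zero.1 ?_).symm
  rw [← intervalIntegral.integral_sub]
  · simpa only [ev, sub_mul] using hP.2 i hi (z i) (hz i)
  all_goals exact Continuous.intervalIntegrable (by unfold ev; fun_prop) _ _

end Broken

def mass (x : ℕ → ℝ) (N : ℕ) (P : Broken) : ℝ :=
  ∑ i ∈ Finset.Icc 1 N, ∫ y in x (i - 1)..x i, (P i).eval y

def energy (x : ℕ → ℝ) (N : ℕ) (P : Broken) : ℝ :=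
  ∑ i ∈ Finset.Icc 1 N, ∫ y in x (i - 1)..x i, (P i).eval y ^ 2

def hamiltonian (x : ℕ → ℝ) (N : ℕ) (ε : ℝ) (V : ℝ → ℝ) (Q P : Broken) : ℝ :=
  ∑ i ∈ Finset.Icc 1 N, ∫ y in x (i - 1)..x i, ((ε / 2) * (Q i).eval y ^ 2 - V ((P i).eval y))

theorem hamiltonian_eq {V : ℝ → ℝ} (hV : Continuous V) (x : ℕ → ℝ) (N : ℕ) (ε : ℝ)
    (Q P : Broken) :
    hamiltonian x N ε V Q P
      = ε / 2 * energy x N Q - ∑ i ∈ Finset.Icc 1 N, ∫ y in x (i - 1)..x i, V ((P i).eval y) := by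
  rw [hamiltonian, energy, mul_sum, ← sum_sub_distrib]
  refine sum_congr rfl fun i _ => ?_
  rw [intervalIntegral.integral_sub, intervalIntegral.integral_const_mul]
  all_goals exact Continuous.intervalIntegrable (by fun_prop) _ _

theorem _root_.Convex.is_const_of_hasDerivWithinAt_zero {s : Set ℝ} (hs : Convex ℝ s)
    {F : ℝ → ℝ}
    (hF : ∀ t ∈ s, HasDerivWithinAt F 0 s t) {t₁ t₂ : ℝ} (h₁ : t₁ ∈ s) (h₂ : t₂ ∈ s) :
    F t₁ = F t₂ := by
  have h := hs.norm_image_sub_le_of_norm_hasDerivWithin_le hF (fun _ _ => norm_zero.le) h₂ h₁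
  rwa [zero_mul, norm_le_zero_iff, sub_eq_zero] at h

section TimeDerivative

variable {x : ℕ → ℝ} {N k : ℕ} {S : Set ℝ} {t : ℝ} {P : ℝ → Broken} {Q : Broken}

theorem hasDerivWithinAt_avgJump_left
    (hd : ∀ i y, HasDerivWithinAt (fun s => (P s i).eval y) ((Q i).eval y) S t) (R : Broken) :
    HasDerivWithinAt (fun s => avgJump x N (P s) R) (avgJump x N Q R) S t := by
  refine HasDerivWithinAt.fun_sum fun i _ => HasDerivWithinAt.mul_const ?_ _
  have hrv : HasDerivWithinAt (fun s => rv x N (P s) i) (rv x N Q i) S t := by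
    by_cases h : i = N
    · simpa only [rv, h, if_true] using hd 1 (x 0)
    · simpa only [rv, h, if_false] using hd (i + 1) (x i)
  exact ((hd i (x i)).add hrv).div_const 2

variable (ht : t ∈ S) (hdeg : ∀ s ∈ S, DegLE k (P s)) (hQ : DegLE k Q)
  (hd : ∀ i y, HasDerivWithinAt (fun s => (P s i).eval y) ((Q i).eval y) S t)
include ht hdeg hQ hd

theorem hasDerivWithinAt_sum_integral {G g : ℕ → ℝ → ℝ → ℝ}
    (hG : ∀ i y z, HasDerivAt (G i y) (g i y z) z)
    (hGc : ∀ i, Continuous (Function.uncurry (G i)))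
    (hgc : ∀ i, Continuous (Function.uncurry (g i))) :
    HasDerivWithinAt
      (fun s => ∑ i ∈ Finset.Icc 1 N, ∫ y in x (i - 1)..x i, G i y ((P s i).eval y))
      (∑ i ∈ Finset.Icc 1 N, ∫ y in x (i - 1)..x i, g i y ((P t i).eval y) * (Q i).eval y) S t :=
  HasDerivWithinAt.fun_sum fun i _ => hasDerivWithinAt_integral_comp_eval (hG i) (hGc i) (hgc i)
    ht (fun s hs => hdeg s hs i) (hQ i) (hd i)

theorem hasDerivWithinAt_ip_left {F : ℕ → ℝ → ℝ} (hF : ∀ i, Continuous (F i)) :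
    HasDerivWithinAt (fun s => ip x N (ev (P s)) F) (ip x N (ev Q) F) S t := by
  refine (hasDerivWithinAt_sum_integral (G := fun i y z => z * F i y) (g := fun i y _ => F i y)
    ht hdeg hQ hd (fun i y z => by simpa using (hasDerivAt_id z).mul_const (F i y))
    (fun i => by fun_prop) (fun i => by fun_prop)).congr_deriv ?_
  exact sum_congr rfl fun i _ => intervalIntegral.integral_congr fun y _ => mul_comm _ _

theorem hasDerivWithinAt_mass :
    HasDerivWithinAt (fun s => mass x N (P s)) (ip x N (ev Q) (ev 1)) S t := by
  refine (hasDerivWithinAt_sum_integral (G := fun _ _ z => z) (g := fun _ _ _ => 1)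
    ht hdeg hQ hd (fun _ _ z => hasDerivAt_id z) (fun _ => by fun_prop)
    (fun _ => by fun_prop)).congr_deriv ?_
  exact sum_congr rfl fun i _ => intervalIntegral.integral_congr fun y _ => by simp [ev]

theorem hasDerivWithinAt_energy :
    HasDerivWithinAt (fun s => energy x N (P s)) (2 * ip x N (ev Q) (ev (P t))) S t := by
  refine (hasDerivWithinAt_sum_integral (G := fun _ _ z => z ^ 2) (g := fun _ _ z => 2 * z)
    ht hdeg hQ hd (fun _ _ z => by simpa using hasDerivAt_pow 2 z) (fun _ => by fun_prop)
    (fun _ => by fun_prop)).congr_deriv ?_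
  rw [ip, mul_sum]
  refine sum_congr rfl fun i _ => ?_
  rw [← intervalIntegral.integral_const_mul]
  exact intervalIntegral.integral_congr fun y _ => by simp only [ev]; ring

theorem hasDerivWithinAt_sum_integral_comp {f V : ℝ → ℝ} (hf : Continuous f)
    (hV : ∀ y, HasDerivAt V (f y) y) :
    HasDerivWithinAt (fun s => ∑ i ∈ Finset.Icc 1 N, ∫ y in x (i - 1)..x i, V ((P s i).eval y))
      (ip x N (fun i y => f ((P t i).eval y)) (ev Q)) S t :=
  hasDerivWithinAt_sum_integral (G := fun _ _ z => V z) (g := fun _ _ z => f z) ht hdeg hQ hd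
    (fun _ _ z => hV z)
    (fun _ => (continuous_iff_continuousAt.2 fun z => (hV z).continuousAt).comp continuous_snd)
    (fun _ => hf.comp continuous_snd)

end TimeDerivative

/-- The scheme at one instant after substituting the traces (2.4) into
`⟨φ̂, v n⟩ = Σ φ̂ ⟦v⟧`. -/
structure SchemeAt (x : ℕ → ℝ) (N k : ℕ) (ε : ℝ) (f : ℝ → ℝ) (τq τp : ℝ) (u q p ut : Broken) :
    Prop where
  degu : DegLE k u
  degq : DegLE k q
  degp : DegLE k p
  degut : DegLE k ut
  eq1 : ∀ v, DegLE k v → ip x N (ev q) (ev v) + ip x N (ev u) (ev (dx v)) = avgJump x N u v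
  eq2 : ∀ z, DegLE k z → ip x N (ev p) (ev z) + ε * ip x N (ev q) (ev (dx z))
      - ε * (avgJump x N q z + τq * eta x N u z) = ip x N (fun i y => f ((u i).eval y)) (ev z)
  eq3 : ∀ w, DegLE k w → ip x N (ev ut) (ev w) - ip x N (ev p) (ev (dx w))
      + (avgJump x N p w + τp * eta x N u w) = 0

namespace SchemeAt

variable {x : ℕ → ℝ} {N k : ℕ} {ε : ℝ} {f : ℝ → ℝ} {τq τp : ℝ} {u q p ut : Broken}
  (h : SchemeAt x N k ε f τq τp u q p ut)
include h

theorem mass_rate_eq_zero : ip x N (ev ut) (ev 1) = 0 := by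
  have h3 := h.eq3 1 fun _ => by simp
  have hdx : dx (1 : Broken) = 0 := funext fun _ => derivative_one
  simpa [hdx, avgJump, eta, jmp_one, ip, ev] using h3

theorem energy_rate_eq (hN : 1 ≤ N) (hf : Continuous f) {V : ℝ → ℝ}
    (hV : ∀ y, HasDerivAt V (f y) y) {Pf : Broken} (hPf : IsProj x N k f u Pf) :
    ip x N (ev ut) (ev u) = ∑ i ∈ Finset.Icc 1 N, (jmpC x N V u i - avg x N Pf i * jmp x N u i)
      - (τp * eta x N u u - ε * τq * eta x N u q) := by
  have split : ∑ i ∈ Finset.Icc 1 N, (jmpC x N V u i - avg x N Pf i * jmp x N u i)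
      = ∑ i ∈ Finset.Icc 1 N, jmpC x N V u i - avgJump x N Pf u := sum_sub_distrib _ _
  linear_combination h.eq3 u h.degu + ip_dx_add_ip_dx hN p u - ip_comm (ev (dx p)) (ev u)
    - h.eq1 p h.degp + ip_comm (ev q) (ev p) + h.eq2 q h.degq - ε * ip_dx_self hN q
    + ip_comp_eq_of_isProj hf hPf h.degq + ip_comm (ev Pf) (ev q) + h.eq1 Pf hPf.1
    - ip_dx_add_ip_dx hN u Pf - ip_comm (ev Pf) (ev (dx u))
    - ip_comp_eq_of_isProj hf hPf (degLE_dx h.degu) + ip_comp_dx hN hf hV u - split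

theorem hamiltonian_rate_eq (hN : 1 ≤ N) {qt : Broken}
    (hdt : ∀ v, DegLE k v →
      ip x N (ev qt) (ev v) + ip x N (ev ut) (ev (dx v)) = avgJump x N ut v) :
    ε * ip x N (ev qt) (ev q) - ip x N (fun i y => f ((u i).eval y)) (ev ut)
      = τp * eta x N p u + ε * τq * eta x N ut u := by
  linear_combination ε * hdt q h.degq + h.eq2 ut h.degut - ε * ip_dx_add_ip_dx hN ut q
    + ε * ip_comm (ev (dx ut)) (ev q) - ε * τq * eta_comm ut u + ip_comm (ev ut) (ev p)
    - h.eq3 p h.degp - ip_dx_self hN p - τp * eta_comm p u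

end SchemeAt

namespace Scheme

variable {x : ℕ → ℝ} {N k : ℕ} {T ε : ℝ} {f : ℝ → ℝ} {u q p ut qt pt : ℝ → Broken}
  {uh qh ph : ℝ → ℕ → ℝ} (hS : Scheme x N k T ε f u q p ut qt pt uh qh ph)
include hS

theorem schemeAt (hN : 1 ≤ N) {t : ℝ} (ht : t ∈ Set.Icc 0 T) {τq τp : ℝ}
    (huh : ∀ i ∈ Finset.Icc 1 N, uh t i = avg x N (u t) i)
    (hqh : ∀ i ∈ Finset.Icc 1 N, qh t i = avg x N (q t) i + τq * jmp x N (u t) i)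
    (hph : ∀ i ∈ Finset.Icc 1 N, ph t i = avg x N (p t) i + τp * jmp x N (u t) i) :
    SchemeAt x N k ε f τq τp (u t) (q t) (p t) (ut t) where
  degu := hS.degu t ht
  degq := hS.degq t ht
  degp := hS.degp t ht
  degut := hS.degut t ht
  eq1 v hv := by
    have e := hS.eq1 t ht v hv
    rw [bt_eq_avgJump_add_eta hN (hS.trace_u t ht) (τ := 0) (U := u t)
      fun i hi => by rw [huh i hi, zero_mul, add_zero]] at e
    linarith
  eq2 z hz := by
    rw [← hS.eq2 t ht z hz, bt_eq_avgJump_add_eta hN (hS.trace_q t ht) hqh]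
  eq3 w hw := by
    rw [← hS.eq3 t ht w hw, bt_eq_avgJump_add_eta hN (hS.trace_p t ht) hph]

theorem degLE_qt (hT : 0 < T) {t : ℝ} (ht : t ∈ Set.Icc 0 T) : DegLE k (qt t) := fun i =>
  natDegree_le_of_hasDerivWithinAt (uniqueDiffOn_Icc hT t ht) ht (fun s hs => hS.degq s hs i)
    (hS.dq t ht i)

theorem eq1_deriv (hT : 0 < T) {τq τp : ℝ → ℝ}
    (hAt : ∀ s ∈ Set.Icc 0 T, SchemeAt x N k ε f (τq s) (τp s) (u s) (q s) (p s) (ut s))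
    {t : ℝ} (ht : t ∈ Set.Icc 0 T) (v : Broken) (hv : DegLE k v) :
    ip x N (ev (qt t)) (ev v) + ip x N (ev (ut t)) (ev (dx v)) = avgJump x N (ut t) v := by
  have hΦ : HasDerivWithinAt
      (fun s => ip x N (ev (q s)) (ev v) + ip x N (ev (u s)) (ev (dx v)) - avgJump x N (u s) v)
      (ip x N (ev (qt t)) (ev v) + ip x N (ev (ut t)) (ev (dx v)) - avgJump x N (ut t) v)
      (Set.Icc 0 T) t :=
    ((hasDerivWithinAt_ip_left ht hS.degq (hS.degLE_qt hT ht) (hS.dq t ht)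
        fun i => (v i).continuous).add
      (hasDerivWithinAt_ip_left ht hS.degu (hS.degut t ht) (hS.du t ht)
        fun i => (v i).derivative.continuous)).sub
      (hasDerivWithinAt_avgJump_left (hS.du t ht) v)
  have h0 := (hasDerivWithinAt_const t (Set.Icc 0 T) (0 : ℝ)).congr_of_mem
    (fun s hs => sub_eq_zero.2 ((hAt s hs).eq1 v hv)) ht
  exact sub_eq_zero.1 ((uniqueDiffOn_Icc hT t ht).eq_deriv _ hΦ h0)

theorem hasDerivWithinAt_hamiltonian (hT : 0 < T) (hf : Continuous f) {V : ℝ → ℝ}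
    (hV : ∀ y, HasDerivAt V (f y) y) {t : ℝ} (ht : t ∈ Set.Icc 0 T) :
    HasDerivWithinAt (fun s => hamiltonian x N ε V (q s) (u s))
      (ε * ip x N (ev (qt t)) (ev (q t)) - ip x N (fun i y => f ((u t i).eval y)) (ev (ut t)))
      (Set.Icc 0 T) t := by
  have hVc : Continuous V := continuous_iff_continuousAt.2 fun y => (hV y).continuousAt
  refine (((hasDerivWithinAt_energy ht hS.degq (hS.degLE_qt hT ht) (hS.dq t ht)).const_mul
    (ε / 2)).sub (hasDerivWithinAt_sum_integral_comp ht hS.degu (hS.degut t ht) (hS.du t ht)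
    hf hV)).congr_of_mem (fun s _ => hamiltonian_eq hVc x N ε _ _) ht |>.congr_deriv ?_
  ring

end Scheme

end DG

/-- Theorem 2.1: the DG scheme with the implicitly defined stabilization parameters
`τ_qu`, `τ_pu` conserves the mass, the energy and the Hamiltonian. -/
theorem dg_full_conservation
    (a b : ℝ) (N k : ℕ) (x : ℕ → ℝ) (hmesh : DG.Mesh a b N x)
    (T ε : ℝ) (hT : 0 < T) (f V : ℝ → ℝ) (hf : Continuous f)
    (hV : ∀ y : ℝ, HasDerivAt V (f y) y)
    (u q p ut qt pt : ℝ → DG.Broken) (uh qh ph : ℝ → ℕ → ℝ)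
    (hS : DG.Scheme x N k T ε f u q p ut qt pt uh qh ph)
    (Pf : ℝ → DG.Broken)
    (hPf : ∀ t ∈ Set.Icc (0:ℝ) T, DG.IsProj x N k f (u t) (Pf t))
    (τqu τpu : ℝ → ℝ)
    -- the numerical traces (2.4): û_h = {u_h}, q̂_h = {q_h} + τ_qu⟦u_h⟧,
    -- p̂_h = {p_h} + τ_pu⟦u_h⟧ at every node
    (huh : ∀ t ∈ Set.Icc (0:ℝ) T, ∀ i ∈ Finset.Icc 1 N,
      uh t i = DG.avg x N (u t) i)
    (hqh : ∀ t ∈ Set.Icc (0:ℝ) T, ∀ i ∈ Finset.Icc 1 N,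
      qh t i = DG.avg x N (q t) i + τqu t * DG.jmp x N (u t) i)
    (hph : ∀ t ∈ Set.Icc (0:ℝ) T, ∀ i ∈ Finset.Icc 1 N,
      ph t i = DG.avg x N (p t) i + τpu t * DG.jmp x N (u t) i)
    -- constraint (a), equation (2.5a)
    (hconsA : ∀ t ∈ Set.Icc (0:ℝ) T,
      τpu t * (∑ i ∈ Finset.Icc 1 N, DG.jmp x N (u t) i ^ 2)
        - ε * τqu t * (∑ i ∈ Finset.Icc 1 N, DG.jmp x N (u t) i * DG.jmp x N (q t) i)
        = ∑ i ∈ Finset.Icc 1 N,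
            (DG.jmpC x N V (u t) i - DG.avg x N (Pf t) i * DG.jmp x N (u t) i))
    -- constraint (b), equation (2.5b)
    (hconsB : ∀ t ∈ Set.Icc (0:ℝ) T,
      τpu t * (∑ i ∈ Finset.Icc 1 N, DG.jmp x N (p t) i * DG.jmp x N (u t) i)
        + ε * τqu t * (∑ i ∈ Finset.Icc 1 N, DG.jmp x N (ut t) i * DG.jmp x N (u t) i)
        = 0) :
    ∀ t₁ ∈ Set.Icc (0:ℝ) T, ∀ t₂ ∈ Set.Icc (0:ℝ) T,
      ((∑ i ∈ Finset.Icc 1 N, ∫ y in (x (i-1))..(x i), ((u t₁) i).eval y)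
          = ∑ i ∈ Finset.Icc 1 N, ∫ y in (x (i-1))..(x i), ((u t₂) i).eval y)
      ∧ ((∑ i ∈ Finset.Icc 1 N, ∫ y in (x (i-1))..(x i), ((u t₁) i).eval y ^ 2)
          = ∑ i ∈ Finset.Icc 1 N, ∫ y in (x (i-1))..(x i), ((u t₂) i).eval y ^ 2)
      ∧ ((∑ i ∈ Finset.Icc 1 N, ∫ y in (x (i-1))..(x i),
            ((ε/2) * ((q t₁) i).eval y ^ 2 - V (((u t₁) i).eval y)))
          = ∑ i ∈ Finset.Icc 1 N, ∫ y in (x (i-1))..(x i),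
              ((ε/2) * ((q t₂) i).eval y ^ 2 - V (((u t₂) i).eval y))) := by
  have hN := hmesh.hN
  have hAt : ∀ t ∈ Set.Icc 0 T, DG.SchemeAt x N k ε f (τqu t) (τpu t) (u t) (q t) (p t) (ut t) :=
    fun t ht => hS.schemeAt hN ht (huh t ht) (hqh t ht) (hph t ht)
  intro t₁ h₁ t₂ h₂
  refine ⟨(convex_Icc 0 T).is_const_of_hasDerivWithinAt_zero (F := fun s => DG.mass x N (u s))
      (fun t ht => ?_) h₁ h₂,
    (convex_Icc 0 T).is_const_of_hasDerivWithinAt_zero (F := fun s => DG.energy x N (u s))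
      (fun t ht => ?_) h₁ h₂,
    (convex_Icc 0 T).is_const_of_hasDerivWithinAt_zero
      (F := fun s => DG.hamiltonian x N ε V (q s) (u s)) (fun t ht => ?_) h₁ h₂⟩
  · exact (DG.hasDerivWithinAt_mass ht hS.degu (hS.degut t ht) (hS.du t ht)).congr_deriv
      (hAt t ht).mass_rate_eq_zero
  · refine (DG.hasDerivWithinAt_energy ht hS.degu (hS.degut t ht) (hS.du t ht)).congr_deriv ?_
    rw [(hAt t ht).energy_rate_eq hN hf hV (hPf t ht), ← hconsA t ht, DG.eta, DG.eta]
    simp only [sq]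
    ring
  · refine (hS.hasDerivWithinAt_hamiltonian hT hf hV ht).congr_deriv ?_
    rw [(hAt t ht).hamiltonian_rate_eq hN (hS.eq1_deriv hT hAt ht), DG.eta, DG.eta, hconsB t ht]
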